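/- arXiv:1208.0326 — 5 statements merged into one kernel-verified Lean document; each statement's English description precedes it below -/
import Mathlib

section
/- For any square real matrix A and any norm on ℝ^n, the logarithmic norm μ(A) = lim_{h→0+}(1/h)(‖I+hA‖−1) equals sup_{‖v‖=1} lim_{h→0+}(1/h)(‖v + hAv‖ − 1). That is, the limit and the supremum over the unit sphere can be interchanged. -/
/-!
For a unit vector `w`, `h ↦ ‖w + h • u‖` is convex, so its difference quotient at `0` is
monotone in `h > 0` and bounded below; hence its one-sided limit exists. The same applies to
`‖I + h • A‖` in the operator space, so `μ(A) ≤ (‖I + t • A‖ - 1) / t` for every `t > 0`.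
Each directional quotient is at most the operator quotient, which gives `≤`. Conversely, the
unit vectors whose quotient at `t` is at least `μ(A)` form nonempty closed subsets of the
compact unit sphere (the operator norm is attained), shrinking as `t ↓ 0`; a common point
`w` of all of them has directional limit at least `μ(A)`, so the supremum is attained.
-/

open Filter Set Topology Metric

theorem MonotoneOn.le_of_tendsto_nhdsGT {α β : Type*} [LinearOrder α] [TopologicalSpace α]
    [OrderTopology α] [DenselyOrdered α] [Preorder β] [TopologicalSpace β]
    [OrderClosedTopology β] {f : α → β} {a t : α} {c : β} (hf : MonotoneOn f (Ioi a))
    (hc : Tendsto f (𝓝[>] a) (𝓝 c)) (ht : a < t) : c ≤ f t :=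
  have := nhdsGT_neBot_of_exists_gt ⟨t, ht⟩
  le_of_tendsto hc <| mem_of_superset (Ioo_mem_nhdsGT ht) fun _ hs ↦ hf hs.1 ht hs.2.le

theorem ContinuousLinearMap.exists_mem_sphere_norm_apply_eq_opNorm {X Y : Type*}
    [NormedAddCommGroup X] [NormedSpace ℝ X] [FiniteDimensional ℝ X] [Nontrivial X]
    [NormedAddCommGroup Y] [NormedSpace ℝ Y] (T : X →L[ℝ] Y) :
    ∃ v ∈ sphere (0 : X) 1, ‖T v‖ = ‖T‖ := by
  rw [← T.sSup_sphere_eq_norm]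
  exact ((isCompact_sphere 0 1).image T.continuous.norm).sSup_mem
    ((NormedSpace.sphere_nonempty.mpr zero_le_one).image _)

section DiffQuot

variable {E : Type*} [NormedAddCommGroup E] [NormedSpace ℝ E]

/-- The difference quotient at `h = 0` of `h ↦ ‖w + h • u‖`, assuming `‖w‖ = 1`. -/
noncomputable def normDiffQuot (w u : E) (h : ℝ) : ℝ := (‖w + h • u‖ - 1) / h

theorem convexOn_norm_add_smul (w u : E) : ConvexOn ℝ univ fun h : ℝ ↦ ‖w + h • u‖ := by
  simpa [Function.comp_def, AffineMap.lineMap_apply, add_comm] using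
    convexOn_univ_norm.comp_affineMap (AffineMap.lineMap (k := ℝ) w (w + u))

theorem monotoneOn_normDiffQuot {w : E} (u : E) (hw : ‖w‖ = 1) :
    MonotoneOn (normDiffQuot w u) (Ioi 0) := fun x hx y hy hxy ↦ by
  simpa [normDiffQuot, hw] using (convexOn_norm_add_smul w u).secant_mono (a := 0)
    (mem_univ _) (mem_univ _) (mem_univ _) hx.ne' hy.ne' hxy

theorem neg_norm_le_normDiffQuot {w : E} (u : E) (hw : ‖w‖ = 1) {h : ℝ} (hh : 0 < h) :
    -‖u‖ ≤ normDiffQuot w u h := by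
  rw [normDiffQuot, le_div_iff₀ hh]
  have := norm_sub_norm_le w (-(h • u))
  rw [sub_neg_eq_add, norm_neg, norm_smul, Real.norm_of_nonneg hh.le, hw] at this
  linarith

theorem exists_tendsto_normDiffQuot {w : E} (u : E) (hw : ‖w‖ = 1) :
    ∃ c, Tendsto (normDiffQuot w u) (𝓝[>] 0) (𝓝 c) :=
  ⟨_, (monotoneOn_normDiffQuot u hw).tendsto_nhdsGT
    ⟨-‖u‖, by rintro _ ⟨h, hh, rfl⟩; exact neg_norm_le_normDiffQuot u hw hh⟩⟩

theorem normDiffQuot_apply_le (A : E →L[ℝ] E) {v : E} (hv : ‖v‖ = 1) {t : ℝ} (ht : 0 ≤ t) :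
    normDiffQuot v (A v) t ≤ normDiffQuot (ContinuousLinearMap.id ℝ E) A t := by
  have := (ContinuousLinearMap.id ℝ E + t • A).le_opNorm v
  rw [hv, mul_one] at this
  exact div_le_div_of_nonneg_right (sub_le_sub_right this 1) ht

theorem exists_norm_eq_one_forall_le_normDiffQuot [FiniteDimensional ℝ E] [Nontrivial E]
    (A : E →L[ℝ] E) {μ : ℝ}
    (hμ : ∀ t > 0, μ ≤ normDiffQuot (ContinuousLinearMap.id ℝ E) A t) :
    ∃ w : E, ‖w‖ = 1 ∧ ∀ t > 0, μ ≤ normDiffQuot w (A w) t := by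
  let K : Ioi (0 : ℝ) → Set E := fun t ↦ sphere 0 1 ∩ {v | μ ≤ normDiffQuot v (A v) t}
  have hK_closed (t) : IsClosed (K t) :=
    isClosed_sphere.inter (isClosed_le continuous_const (by unfold normDiffQuot; fun_prop))
  have hK_nonempty (t : Ioi (0 : ℝ)) : (K t).Nonempty := by
    obtain ⟨v, hv, hv_norm⟩ :=
      (ContinuousLinearMap.id ℝ E + t.1 • A).exists_mem_sphere_norm_apply_eq_opNorm
    exact ⟨v, hv, (hμ t t.2).trans_eq (by rw [normDiffQuot, normDiffQuot, ← hv_norm]; rfl)⟩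
  have hK_mono : Monotone K := fun s t hst v hv ↦
    ⟨hv.1, hv.2.trans <| monotoneOn_normDiffQuot _ (mem_sphere_zero_iff_norm.1 hv.1) s.2 t.2 hst⟩
  have : Nonempty (Ioi (0 : ℝ)) := ⟨⟨1, mem_Ioi.2 one_pos⟩⟩
  obtain ⟨w, hw⟩ := IsCompact.nonempty_iInter_of_directed_nonempty_isCompact_isClosed K
    hK_mono.directed_ge hK_nonempty
    (fun t ↦ (isCompact_sphere 0 1).of_isClosed_subset (hK_closed t) inter_subset_left) hK_closed
  rw [mem_iInter] at hw
  exact ⟨w, mem_sphere_zero_iff_norm.1 (hw ⟨1, mem_Ioi.2 one_pos⟩).1, fun t ht ↦ (hw ⟨t, ht⟩).2⟩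

end DiffQuot

/-- The logarithmic norm `μ(A) = lim_{h→0⁺}(‖I+hA‖-1)/h` of a linear operator on a
finite-dimensional real normed space equals the supremum, over unit vectors `v`, of
`lim_{h→0⁺}(‖v+hAv‖-1)/h`: the limit and the supremum over the unit sphere can be
interchanged. -/
theorem logNorm_eq_sup_unit_sphere
    {X : Type*} [NormedAddCommGroup X] [NormedSpace ℝ X] [FiniteDimensional ℝ X] [Nontrivial X]
    (A : X →L[ℝ] X) (μA : ℝ)
    (hμ : Tendsto (fun h : ℝ => (‖ContinuousLinearMap.id ℝ X + h • A‖ - 1) / h)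
      (nhdsWithin 0 (Set.Ioi 0)) (nhds μA)) :
    μA = sSup {c : ℝ | ∃ v : X, ‖v‖ = 1 ∧
      Tendsto (fun h : ℝ => (‖v + h • A v‖ - 1) / h) (nhdsWithin 0 (Set.Ioi 0)) (nhds c)} := by
  set S := {c : ℝ | ∃ v : X, ‖v‖ = 1 ∧
      Tendsto (fun h : ℝ => (‖v + h • A v‖ - 1) / h) (nhdsWithin 0 (Set.Ioi 0)) (nhds c)}
  have upper : ∀ c ∈ S, c ≤ μA := by
    rintro c ⟨v, hv, hc⟩
    exact le_of_tendsto_of_tendsto hc hμ <|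
      eventually_mem_nhdsWithin.mono fun t ht ↦ normDiffQuot_apply_le A hv (le_of_lt ht)
  have hμ_le (t : ℝ) (ht : 0 < t) : μA ≤ normDiffQuot (ContinuousLinearMap.id ℝ X) A t :=
    (monotoneOn_normDiffQuot A ContinuousLinearMap.norm_id).le_of_tendsto_nhdsGT hμ ht
  obtain ⟨w, hw, hwμ⟩ := exists_norm_eq_one_forall_le_normDiffQuot A hμ_le
  obtain ⟨c, hc⟩ := exists_tendsto_normDiffQuot (A w) hw
  have hc_mem : c ∈ S := ⟨w, hw, hc⟩
  have hc_eq : c = μA :=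
    (upper c hc_mem).antisymm (ge_of_tendsto hc (eventually_mem_nhdsWithin.mono hwμ))
  exact (IsGreatest.csSup_eq ⟨hc_eq ▸ hc_mem, upper⟩).symm
end

section
/- Minimax criterion: Let X, Y be sets and φ : X × Y → ℝ. For y ∈ Y and c ∈ ℝ, set H_{y,c} = {x ∈ X : φ(x,y) ≥ c}, let C = {c ∈ ℝ : H_{y,c} ≠ ∅ for all y ∈ Y}, and c* = sup C. If for every c < c* the intersection ⋂_{y∈Y} H_{y,c} is nonempty, then sup_{x∈X} inf_{y∈Y} φ(x,y) = inf_{y∈Y} sup_{x∈X} φ(x,y) = c*. -/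
/-- Minimax criterion (Joó): if `C = {c | ∀ y, ∃ x, φ(x,y) ≥ c}` is nonempty and bounded above
with `c* = sup C`, and for every `c < c*` the sets `H_{y,c} = {x | φ(x,y) ≥ c}` have nonempty
intersection over `y ∈ Y`, then `sup_x inf_y φ(x,y) = inf_y sup_x φ(x,y) = c*` (the suprema and
infima computed in the extended reals). -/
theorem minimax_criterion {X Y : Type*} [Nonempty X] [Nonempty Y] (φ : X → Y → ℝ)
    (C : Set ℝ) (hC : C = {c : ℝ | ∀ y : Y, ∃ x : X, c ≤ φ x y})
    (hne : C.Nonempty) (hbdd : BddAbove C)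
    (hcap : ∀ c : ℝ, c < sSup C → ∃ x : X, ∀ y : Y, c ≤ φ x y) :
    (⨆ x : X, ⨅ y : Y, (φ x y : EReal)) = (⨅ y : Y, ⨆ x : X, (φ x y : EReal)) ∧
      (⨆ x : X, ⨅ y : Y, (φ x y : EReal)) = ((sSup C : ℝ) : EReal) := by
  set s : ℝ := sSup C with hs
  have h1 : ((s : ℝ) : EReal) ≤ ⨆ x : X, ⨅ y : Y, (φ x y : EReal) := by
    by_contra h
    push_neg at h
    obtain ⟨c, hc1, hc2⟩ := EReal.exists_between_coe_real h
    have hcs : c < s := by exact_mod_cast hc2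
    obtain ⟨x, hx⟩ := hcap c hcs
    have : (c : EReal) ≤ ⨅ y : Y, (φ x y : EReal) := by
      apply le_iInf
      intro y
      exact_mod_cast hx y
    exact absurd (this.trans (le_iSup (fun x => ⨅ y : Y, (φ x y : EReal)) x)) (not_le.mpr hc1)
  have h2 : (⨅ y : Y, ⨆ x : X, (φ x y : EReal)) ≤ ((s : ℝ) : EReal) := by
    by_contra h
    push_neg at h
    obtain ⟨c, hc1, hc2⟩ := EReal.exists_between_coe_real h
    have hcs : s < c := by exact_mod_cast hc1
    have hcC : c ∉ C := fun hc => absurd (le_csSup hbdd hc) (not_le.mpr hcs)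
    rw [hC] at hcC
    simp only [Set.mem_setOf_eq, not_forall, not_exists, not_le] at hcC
    obtain ⟨y, hy⟩ := hcC
    have : (⨆ x : X, (φ x y : EReal)) ≤ (c : EReal) := by
      apply iSup_le
      intro x
      exact_mod_cast (hy x).le
    exact absurd ((iInf_le (fun y => ⨆ x : X, (φ x y : EReal)) y).trans this) (not_le.mpr hc2)
  have h3 : (⨆ x : X, ⨅ y : Y, (φ x y : EReal)) ≤ ⨅ y : Y, ⨆ x : X, (φ x y : EReal) :=
    iSup_iInf_le_iInf_iSup _
  refine ⟨le_antisymm h3 (h2.trans h1), le_antisymm ?_ h1⟩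
  exact h3.trans h2
end

section
/- Let ℒ = −L ⊗ D where L ∈ ℝ^{N×N} is a symmetric graph Laplacian (L𝟏 = 0, off-diagonal entries of L nonpositive) and D = diag(d₁,...,d_n) with d_i > 0. Then the logarithmic norm of ℒ induced by the L¹ norm on ℝ^{nN} is zero: μ₁(−L ⊗ D) = 0. -/
open Filter Matrix Kronecker

/-- The operator norm of a matrix induced by the `L¹` norm. -/
noncomputable def opNormL1 {ι : Type*} [Fintype ι] (M : Matrix ι ι ℝ) : ℝ :=
  sSup {r : ℝ | ∃ x : ι → ℝ, (∑ i, |x i|) = 1 ∧ r = ∑ i, |M.mulVec x i|}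

lemma opNormL1_eq_one {ι : Type*} [Fintype ι] [DecidableEq ι] [Nonempty ι]
    (M : Matrix ι ι ℝ) (hcol : ∀ j, ∑ i, |M i j| = 1) : opNormL1 M = 1 := by
  have hub : ∀ r ∈ {r : ℝ | ∃ x : ι → ℝ, (∑ i, |x i|) = 1 ∧ r = ∑ i, |M.mulVec x i|},
      r ≤ 1 := by
    rintro r ⟨x, hx, rfl⟩
    calc ∑ i, |M.mulVec x i| ≤ ∑ i, ∑ j, |M i j| * |x j| := by
          refine Finset.sum_le_sum fun i _ => ?_
          simp only [mulVec, dotProduct]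
          refine (Finset.abs_sum_le_sum_abs _ _).trans ?_
          exact Finset.sum_le_sum fun j _ => le_of_eq (abs_mul _ _)
      _ = ∑ j, (∑ i, |M i j|) * |x j| := by
          rw [Finset.sum_comm]; simp [Finset.sum_mul]
      _ = ∑ j, |x j| := by simp [hcol]
      _ = 1 := hx
  have hmem : (1:ℝ) ∈ {r : ℝ | ∃ x : ι → ℝ, (∑ i, |x i|) = 1 ∧ r = ∑ i, |M.mulVec x i|} := by
    obtain ⟨j₀⟩ := ‹Nonempty ι›
    refine ⟨fun i => if i = j₀ then 1 else 0, ?_, ?_⟩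
    · simp [apply_ite abs]
    · have hmv : ∀ i, M.mulVec (fun i => if i = j₀ then (1:ℝ) else 0) i = M i j₀ := by
        intro i
        simp [mulVec, dotProduct, mul_ite]
      simp [hmv, hcol j₀]
  exact le_antisymm (csSup_le ⟨1, hmem⟩ hub) (le_csSup ⟨1, hub⟩ hmem)

/-- For a symmetric graph Laplacian `L` (`L𝟏 = 0`, nonpositive off-diagonal entries) and a
positive diagonal matrix `D`, the logarithmic norm of `ℒ = -L ⊗ D` induced by the `L¹` norm
on `ℝ^{nN}` is zero: `μ₁(-L ⊗ D) = 0`. -/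
theorem mu_one_neg_laplacian_kronecker {N n : ℕ} (hN : 0 < N) (hn : 0 < n)
    (L : Matrix (Fin N) (Fin N) ℝ) (hsym : L.IsSymm)
    (hL1 : L.mulVec (fun _ => 1) = 0)
    (hoff : ∀ i j, i ≠ j → L i j ≤ 0)
    (d : Fin n → ℝ) (hd : ∀ i, 0 < d i) :
    Tendsto (fun h : ℝ =>
        (opNormL1 ((1 : Matrix (Fin N × Fin n) (Fin N × Fin n) ℝ)
          + h • (-(L ⊗ₖ Matrix.diagonal d))) - 1) / h)
      (nhdsWithin 0 (Set.Ioi 0)) (nhds 0) := by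
  have : NeZero N := ⟨hN.ne'⟩
  have : NeZero n := ⟨hn.ne'⟩
  -- column sums of L vanish
  have hrow : ∀ j, ∑ i, L j i = 0 := fun j => by
    simpa [mulVec, dotProduct] using congrFun hL1 j
  have hcolL : ∀ j, ∑ i, L i j = 0 := fun j => by
    rw [Finset.sum_congr rfl fun i _ => (hsym.apply j i : L i j = L j i)]
    exact hrow j
  -- diagonal of L is nonnegative
  have hdiag : ∀ j, 0 ≤ L j j := by
    intro j
    have he : ∑ i ∈ Finset.univ.erase j, L i j + L j j = 0 := by
      rw [Finset.sum_erase_add _ _ (Finset.mem_univ j)]; exact hcolL j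
    have hle : ∑ i ∈ Finset.univ.erase j, L i j ≤ 0 :=
      Finset.sum_nonpos fun i hi => hoff i j (Finset.ne_of_mem_erase hi)
    linarith
  set C : ℝ := ∑ j, L j j with hC
  set S : ℝ := ∑ l, d l with hS
  have hC0 : 0 ≤ C := Finset.sum_nonneg fun j _ => hdiag j
  have hS0 : 0 < S := Finset.sum_pos (fun l _ => hd l) Finset.univ_nonempty
  set B : ℝ := C * S + 1 with hB
  have hB0 : 0 < B := by positivity
  -- key: the operator norm is 1 for small h > 0
  have key : ∀ h : ℝ, h ∈ Set.Ioo (0:ℝ) (1/B) →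
      opNormL1 ((1 : Matrix (Fin N × Fin n) (Fin N × Fin n) ℝ)
        + h • (-(L ⊗ₖ Matrix.diagonal d))) = 1 := by
    intro h ⟨hh0, hh1⟩
    apply opNormL1_eq_one
    rintro ⟨j, l⟩
    rw [Fintype.sum_prod_type]
    have hbound : h * (L j j * d l) < 1 := by
      have h1 : L j j ≤ C := Finset.single_le_sum (fun i _ => hdiag i) (Finset.mem_univ j)
      have h2 : d l ≤ S := Finset.single_le_sum (fun i _ => (hd i).le) (Finset.mem_univ l)
      have h3 : L j j * d l ≤ C * S := mul_le_mul h1 h2 (hd l).le hC0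
      have h4 : h * B < 1 := by
        rw [lt_div_iff₀ hB0] at hh1; linarith
      nlinarith [mul_le_mul_of_nonneg_left h3 hh0.le]
    have hterm : ∀ (i : Fin N) (k : Fin n),
        |((1 : Matrix (Fin N × Fin n) (Fin N × Fin n) ℝ)
          + h • (-(L ⊗ₖ Matrix.diagonal d))) (i,k) (j,l)|
        = if k = l then (if i = j then 1 - h * (L j j * d l)
            else -(h * (L i j * d l))) else 0 := by
      intro i k
      have he : ((1 : Matrix (Fin N × Fin n) (Fin N × Fin n) ℝ)
          + h • (-(L ⊗ₖ Matrix.diagonal d))) (i,k) (j,l)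
          = (if i = j ∧ k = l then 1 else 0)
            + h * (-(L i j * (if k = l then d k else 0))) := by
        simp [Matrix.add_apply, Matrix.one_apply, Matrix.smul_apply, Matrix.neg_apply,
          kroneckerMap_apply, Matrix.diagonal_apply, Prod.ext_iff]
      by_cases hk : k = l
      · subst hk
        by_cases hi : i = j
        · subst hi
          rw [he, if_pos ⟨rfl, rfl⟩, if_pos rfl, if_pos rfl, if_pos rfl]
          rw [abs_of_nonneg (by linarith)]
          ring
        · rw [he, if_neg (fun hc => hi hc.1), zero_add, if_pos rfl, if_pos rfl, if_neg hi]
          have hnn : 0 ≤ h * -(L i j * d k) :=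
            mul_nonneg hh0.le (neg_nonneg.2
              (mul_nonpos_of_nonpos_of_nonneg (hoff i j hi) (hd k).le))
          rw [abs_of_nonneg hnn]; ring
      · simp [hk]
    simp_rw [hterm]
    rw [Finset.sum_congr rfl (fun i _ => Finset.sum_ite_eq' Finset.univ l _)]
    simp only [Finset.mem_univ, if_pos]
    rw [← Finset.add_sum_erase _ _ (Finset.mem_univ j), if_pos rfl]
    have hrest : ∑ i ∈ Finset.univ.erase j, (if i = j then 1 - h * (L j j * d l)
        else -(h * (L i j * d l))) = h * d l * L j j := by
      rw [Finset.sum_congr rfl (fun i hi => if_neg (Finset.ne_of_mem_erase hi))]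
      have h1 : ∑ i ∈ Finset.univ.erase j, L i j = -(L j j) := by
        have := Finset.sum_erase_add Finset.univ (fun i => L i j) (Finset.mem_univ j)
        have h2 := hcolL j
        linarith [this.trans h2]
      calc ∑ i ∈ Finset.univ.erase j, -(h * (L i j * d l))
          = ∑ i ∈ Finset.univ.erase j, (-(h * d l)) * L i j := by
            refine Finset.sum_congr rfl fun i _ => by ring
        _ = (-(h * d l)) * ∑ i ∈ Finset.univ.erase j, L i j := by
            rw [Finset.mul_sum]
        _ = h * d l * L j j := by rw [h1]; ring
    rw [hrest]; ring
  -- conclude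
  have hev : (fun h : ℝ =>
        (opNormL1 ((1 : Matrix (Fin N × Fin n) (Fin N × Fin n) ℝ)
          + h • (-(L ⊗ₖ Matrix.diagonal d))) - 1) / h)
      =ᶠ[nhdsWithin 0 (Set.Ioi 0)] fun _ => (0:ℝ) := by
    filter_upwards [Ioo_mem_nhdsGT_of_mem (show (0:ℝ) ∈ Set.Ico (0:ℝ) (1/B) from ⟨le_refl 0, one_div_pos.mpr hB0⟩)]
      with h hh
    rw [key h hh]; simp
  exact (tendsto_const_nhds.congr' hev.symm)
end

section
/- Let L ∈ ℝ^{N×N} be a symmetric graph Laplacian (L𝟏 = 0, off-diagonal entries nonpositive) and D = diag(d₁,…,d_n) with d_i > 0, and set ℒ = −L ⊗ D. Then for every 1 ≤ p ≤ ∞ and any solution u of u̇ = ℒu, the p-norm ‖u(t)‖_p is nonincreasing in t; consequently μ_p(ℒ) = 0 (since 0 is an eigenvalue). -/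
/-!
The matrix `A = -(L ⊗ D)` has nonnegative off-diagonal entries and zero row sums, hence also zero
column sums by symmetry. Consequently `1 + h A` for small `h > 0`, and `exp (t A)` for all `t ≥ 0`,
are doubly stochastic; for the exponential, shift `A` by a multiple of the identity to make it
entrywise nonnegative. Doubly stochastic matrices are contractions for every `L^p` norm (Jensen)
and fix the constant vectors, so their induced norm is exactly `1`. Since
`u t = exp ((t - s) A) u s`, the norm of `u` is nonincreasing, and the difference quotient defining
`μ_p(A)` vanishes for all small `h > 0`.
-/

open Filter Matrix Kronecker

/-- The `L^p` norm (`1 ≤ p ≤ ∞`) of a vector. -/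
noncomputable def lpVecNorm {ι : Type*} [Fintype ι] (p : ENNReal) (x : ι → ℝ) : ℝ :=
  if p = ⊤ then ⨆ i, |x i| else (∑ i, |x i| ^ p.toReal) ^ (1 / p.toReal)

/-- The operator norm of a matrix induced by the `L^p` norm. -/
noncomputable def lpOpNorm {ι : Type*} [Fintype ι] (p : ENNReal) (M : Matrix ι ι ℝ) : ℝ :=
  sSup {r : ℝ | ∃ x : ι → ℝ, lpVecNorm p x = 1 ∧ r = lpVecNorm p (M.mulVec x)}

open Topology

section Contraction

variable {ι : Type*} [Fintype ι] {M : Matrix ι ι ℝ}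

lemma abs_mulVec_apply_le (hM : ∀ i j, 0 ≤ M i j) (x : ι → ℝ) (i : ι) :
    |(M *ᵥ x) i| ≤ ∑ j, M i j * |x j| :=
  calc |(M *ᵥ x) i| ≤ ∑ j, |M i j * x j| := Finset.abs_sum_le_sum_abs _ _
    _ = ∑ j, M i j * |x j| := by simp_rw [abs_mul, abs_of_nonneg (hM i _)]

lemma exists_lpVecNorm_const_eq_one [Nonempty ι] {p : ENNReal} (hp : p ≠ 0) :
    ∃ c : ℝ, lpVecNorm p (fun _ : ι => c) = 1 := by
  rcases eq_or_ne p ⊤ with rfl | hp_top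
  · exact ⟨1, by simp [lpVecNorm]⟩
  have hq : 0 < p.toReal := ENNReal.toReal_pos hp hp_top
  have hcard : (0 : ℝ) < Fintype.card ι := by exact_mod_cast Fintype.card_pos
  refine ⟨(Fintype.card ι : ℝ) ^ (-p.toReal⁻¹), ?_⟩
  simp only [lpVecNorm, if_neg hp_top, abs_of_pos (Real.rpow_pos_of_pos hcard _),
    Finset.sum_const, Finset.card_univ, nsmul_eq_mul, ← Real.rpow_mul hcard.le,
    neg_mul, inv_mul_cancel₀ hq.ne', Real.rpow_neg_one, mul_inv_cancel₀ hcard.ne', Real.one_rpow]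

variable [DecidableEq ι]

lemma lpVecNorm_top_mulVec_le [Nonempty ι] (hM : M ∈ doublyStochastic ℝ ι) (x : ι → ℝ) :
    lpVecNorm ⊤ (M *ᵥ x) ≤ lpVecNorm ⊤ x := by
  simp only [lpVecNorm, if_true]
  have hbdd : BddAbove (Set.range fun j => |x j|) := (Set.finite_range _).bddAbove
  refine ciSup_le fun i => (abs_mulVec_apply_le hM.1 x i).trans ?_
  calc ∑ j, M i j * |x j| ≤ ∑ j, M i j * ⨆ k, |x k| :=
        Finset.sum_le_sum fun j _ => mul_le_mul_of_nonneg_left (le_ciSup hbdd j) (hM.1 i j)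
    _ = ⨆ k, |x k| := by rw [← Finset.sum_mul, sum_row_of_mem_doublyStochastic hM, one_mul]

/-- Jensen's inequality for the convex map `r ↦ r ^ p`, applied row by row; the column sums then
redistribute the mass. -/
lemma lpVecNorm_mulVec_le_of_ne_top (hM : M ∈ doublyStochastic ℝ ι) {p : ENNReal} (hp : 1 ≤ p)
    (hp_top : p ≠ ⊤) (x : ι → ℝ) : lpVecNorm p (M *ᵥ x) ≤ lpVecNorm p x := by
  have hq : 1 ≤ p.toReal := by simpa using ENNReal.toReal_mono hp_top hp
  simp only [lpVecNorm, if_neg hp_top]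
  refine Real.rpow_le_rpow (by positivity) ?_ (by positivity)
  calc ∑ i, |(M *ᵥ x) i| ^ p.toReal ≤ ∑ i, (∑ j, M i j * |x j|) ^ p.toReal := by
        gcongr with i; exact abs_mulVec_apply_le hM.1 x i
    _ ≤ ∑ i, ∑ j, M i j * |x j| ^ p.toReal := by
        gcongr with i
        exact Real.rpow_arith_mean_le_arith_mean_rpow _ _ _ (fun j _ => hM.1 i j)
          (sum_row_of_mem_doublyStochastic hM i) (fun j _ => abs_nonneg _) hq
    _ = ∑ j, |x j| ^ p.toReal := by
        rw [Finset.sum_comm]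
        simp_rw [← Finset.sum_mul, sum_col_of_mem_doublyStochastic hM, one_mul]

lemma lpVecNorm_mulVec_le [Nonempty ι] (hM : M ∈ doublyStochastic ℝ ι) {p : ENNReal}
    (hp : 1 ≤ p) (x : ι → ℝ) : lpVecNorm p (M *ᵥ x) ≤ lpVecNorm p x := by
  rcases eq_or_ne p ⊤ with rfl | hp_top
  · exact lpVecNorm_top_mulVec_le hM x
  · exact lpVecNorm_mulVec_le_of_ne_top hM hp hp_top x

/-- The supremum is attained at a constant vector of norm `1`, which `M` fixes. -/
lemma lpOpNorm_eq_one [Nonempty ι] (hM : M ∈ doublyStochastic ℝ ι) {p : ENNReal} (hp : 1 ≤ p) :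
    lpOpNorm p M = 1 := by
  obtain ⟨c, hc⟩ := exists_lpVecNorm_const_eq_one (ι := ι) (one_pos.trans_le hp).ne'
  have hMc : M *ᵥ (fun _ => c) = fun _ => c := by
    rw [show (fun _ : ι => c) = c • 1 from funext fun _ => (mul_one c).symm, mulVec_smul,
      mulVec_one_of_mem_doublyStochastic hM]
  refine IsGreatest.csSup_eq ⟨⟨_, hc, by rw [hMc, hc]⟩, ?_⟩
  rintro r ⟨x, hx, rfl⟩
  exact hx ▸ lpVecNorm_mulVec_le hM hp x

end Contraction

structure IsDoublyStochasticGenerator {ι : Type*} [Fintype ι] (A : Matrix ι ι ℝ) : Prop where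
  offDiag_nonneg : ∀ i j, i ≠ j → 0 ≤ A i j
  mulVec_one : A *ᵥ 1 = 0
  one_vecMul : 1 ᵥ* A = 0

namespace IsDoublyStochasticGenerator

variable {ι : Type*} [Fintype ι] {A : Matrix ι ι ℝ}

lemma of_isSymm (hA : A.IsSymm) (hoff : ∀ i j, i ≠ j → 0 ≤ A i j) (h1 : A *ᵥ 1 = 0) :
    IsDoublyStochasticGenerator A :=
  ⟨hoff, h1, by rw [← mulVec_transpose, hA.eq, h1]⟩

lemma smul (hA : IsDoublyStochasticGenerator A) {r : ℝ} (hr : 0 ≤ r) :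
    IsDoublyStochasticGenerator (r • A) :=
  ⟨fun i j hij => mul_nonneg hr (hA.offDiag_nonneg i j hij),
    by rw [smul_mulVec, hA.mulVec_one, smul_zero], by rw [vecMul_smul, hA.one_vecMul, smul_zero]⟩

variable [DecidableEq ι]

lemma eventually_one_add_smul_mem_doublyStochastic (hA : IsDoublyStochasticGenerator A) :
    ∀ᶠ h : ℝ in 𝓝[>] 0, 1 + h • A ∈ doublyStochastic ℝ ι := by
  have hdiag : ∀ᶠ h in 𝓝[>] (0 : ℝ), ∀ i, 0 ≤ 1 + h * A i i := by
    refine eventually_all.2 fun i => (Tendsto.eventually_const_lt one_pos ?_).mono fun _ => le_of_lt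
    exact tendsto_nhdsWithin_of_tendsto_nhds (Continuous.tendsto' (by fun_prop) _ _ (by simp))
  filter_upwards [hdiag, self_mem_nhdsWithin] with h hh_diag (hh : 0 < h)
  refine ⟨fun i j => ?_, ?_, ?_⟩
  · rcases eq_or_ne i j with rfl | hij
    · simpa using hh_diag i
    · simpa [one_apply_ne hij] using mul_nonneg hh.le (hA.offDiag_nonneg i j hij)
  · rw [add_mulVec, one_mulVec, smul_mulVec, hA.mulVec_one, smul_zero, add_zero]
  · rw [vecMul_add, vecMul_one, vecMul_smul, hA.one_vecMul, smul_zero, add_zero]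

end IsDoublyStochasticGenerator

section Exp

attribute [local instance] Matrix.linftyOpNormedRing Matrix.linftyOpNormedAlgebra

open NormedSpace

variable {ι : Type*} [Fintype ι] [DecidableEq ι]

lemma exp_apply_nonneg_of_nonneg {M : Matrix ι ι ℝ} (hM : ∀ i j, 0 ≤ M i j) (i j : ι) :
    0 ≤ exp M i j := by
  have hs : Summable fun k : ℕ => (k.factorial⁻¹ : ℝ) • M ^ k := expSeries_summable' M
  have hexp : exp M i j = ∑' k : ℕ, ((k.factorial⁻¹ : ℝ) • M ^ k) i j := by
    rw [congrFun (exp_eq_tsum ℝ) M]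
    exact congrFun (tsum_apply hs) j |>.trans (tsum_apply (Pi.summable.1 hs i))
  have hpow : ∀ k j, 0 ≤ (M ^ k) i j := by
    intro k
    induction k with
    | zero => intro j; simp only [pow_zero, one_apply]; positivity
    | succ k ih =>
      intro j
      rw [pow_succ, mul_apply]
      exact Finset.sum_nonneg fun l _ => mul_nonneg (ih l) (hM l j)
  rw [hexp]
  exact tsum_nonneg fun k => mul_nonneg (by positivity) (hpow k j)

lemma exp_smul_one (r : ℝ) : exp (r • (1 : Matrix ι ι ℝ)) = Real.exp r • 1 := by
  have := algebraMap_exp_comm (𝔸 := Matrix ι ι ℝ) r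
  rw [Algebra.algebraMap_eq_smul_one, Algebra.algebraMap_eq_smul_one] at this
  rw [Real.exp_eq_exp_ℝ]
  exact this.symm

/-- Shifting by a multiple of the identity makes the matrix entrywise nonnegative, and only
rescales the exponential by a positive factor. -/
lemma exp_apply_nonneg_of_offDiag_nonneg {M : Matrix ι ι ℝ} (hM : ∀ i j, i ≠ j → 0 ≤ M i j)
    (i j : ι) : 0 ≤ exp M i j := by
  set c : ℝ := ∑ k, |M k k|
  have hshift : ∀ i j, 0 ≤ (M + c • 1) i j := by
    intro i j
    rcases eq_or_ne i j with rfl | hij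
    · have hc : |M i i| ≤ c := Finset.single_le_sum (f := fun k => |M k k|)
        (fun _ _ => abs_nonneg _) (Finset.mem_univ i)
      simp only [Matrix.add_apply, Matrix.smul_apply, one_apply_eq, smul_eq_mul, mul_one]
      linarith [neg_abs_le (M i i)]
    · simpa [one_apply_ne hij] using hM i j hij
  have hcomm : Commute (M + c • 1) ((-c) • 1) := (Commute.one_right _).smul_right _
  rw [show M = (M + c • 1) + (-c) • 1 by module, Matrix.exp_add_of_commute _ _ hcomm,
    exp_smul_one, mul_smul_comm, mul_one, Matrix.smul_apply, smul_eq_mul]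
  exact mul_nonneg (Real.exp_nonneg _) (exp_apply_nonneg_of_nonneg hshift i j)

lemma hasDerivAt_exp_smul_mulVec_of_hasDerivAt {A : Matrix ι ι ℝ} {u : ℝ → ι → ℝ}
    (hu : ∀ t, HasDerivAt u (A *ᵥ u t) t) (s t : ℝ) :
    HasDerivAt (fun τ => exp ((s - τ) • A) *ᵥ u τ) 0 t := by
  have hexp : HasDerivAt (fun τ : ℝ => exp ((s - τ) • A))
      ((-1 : ℝ) • (exp ((s - t) • A) * A)) t :=
    (hasDerivAt_exp_smul_const A (s - t)).scomp t ((hasDerivAt_id t).const_sub s)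
  have h := (mulVecBilin ℝ ℝ).toContinuousBilinearMap.hasDerivAt_of_bilinear
    (fun _ => hexp) (fun _ => hu t)
  simp only [LinearMap.toContinuousBilinearMap_apply, mulVecBilin_apply] at h
  refine h.congr_deriv ?_
  rw [neg_one_smul, neg_mulVec, mulVec_mulVec, add_neg_cancel]

lemma eq_exp_smul_mulVec_of_hasDerivAt {A : Matrix ι ι ℝ} {u : ℝ → ι → ℝ}
    (hu : ∀ t, HasDerivAt u (A *ᵥ u t) t) (s t : ℝ) :
    u t = exp ((t - s) • A) *ᵥ u s := by
  have hconst := is_const_of_deriv_eq_zero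
    (fun τ => (hasDerivAt_exp_smul_mulVec_of_hasDerivAt hu s τ).differentiableAt)
    (fun τ => (hasDerivAt_exp_smul_mulVec_of_hasDerivAt hu s τ).deriv) s t
  rw [sub_self, zero_smul, exp_zero, one_mulVec] at hconst
  rw [hconst, mulVec_mulVec, ← Matrix.exp_add_of_commute _ _
    (((Commute.refl A).smul_left _).smul_right _), ← add_smul, sub_add_sub_cancel', sub_self,
    zero_smul, exp_zero, one_mulVec]

lemma exp_mulVec_of_mulVec_eq_zero {M : Matrix ι ι ℝ} {v : ι → ℝ} (h : M *ᵥ v = 0) :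
    exp M *ᵥ v = v := by
  simpa using (eq_exp_smul_mulVec_of_hasDerivAt (A := M) (u := fun _ => v)
    (fun _ => by simpa [h] using hasDerivAt_const _ v) 0 1).symm

lemma IsDoublyStochasticGenerator.exp_mem_doublyStochastic {A : Matrix ι ι ℝ}
    (hA : IsDoublyStochasticGenerator A) : exp A ∈ doublyStochastic ℝ ι :=
  ⟨exp_apply_nonneg_of_offDiag_nonneg hA.offDiag_nonneg,
    exp_mulVec_of_mulVec_eq_zero hA.mulVec_one,
    by rw [← mulVec_transpose, ← Matrix.exp_transpose,
      exp_mulVec_of_mulVec_eq_zero (by rw [mulVec_transpose, hA.one_vecMul])]⟩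

end Exp

lemma isDoublyStochasticGenerator_neg_kronecker_diagonal {κ ι : Type*} [Fintype κ] [Fintype ι]
    [DecidableEq ι] {L : Matrix κ κ ℝ} (hsym : L.IsSymm) (hL1 : L *ᵥ 1 = 0)
    (hoff : ∀ a b, a ≠ b → L a b ≤ 0) {d : ι → ℝ} (hd : ∀ i, 0 ≤ d i) :
    IsDoublyStochasticGenerator (-(L ⊗ₖ diagonal d)) := by
  refine .of_isSymm ?_ ?_ ?_
  · rw [IsSymm, transpose_neg, ← kroneckerMap_transpose, diagonal_transpose, hsym.eq]
  · rintro ⟨a, i⟩ ⟨b, j⟩ hne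
    rcases eq_or_ne i j with rfl | hij
    · have hab : a ≠ b := fun h => hne (h ▸ rfl)
      simpa using mul_nonneg (neg_nonneg.2 (hoff a b hab)) (hd i)
    · simp [diagonal_apply_ne _ hij]
  · ext ⟨a, i⟩
    have hrow : ∑ b, L a b = 0 := by simpa [mulVec, dotProduct] using congrFun hL1 a
    simp [mulVec, dotProduct, Fintype.sum_prod_type, diagonal_apply, ← Finset.sum_mul, hrow]

/-- For a symmetric graph Laplacian `L` (`L𝟏 = 0`, nonpositive off-diagonal entries), a positive
diagonal matrix `D`, and `ℒ = -L ⊗ D`, for every `1 ≤ p ≤ ∞` every solution of `u̇ = ℒu` has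
nonincreasing `L^p` norm `‖u(t)‖_p`; consequently the induced matrix measure satisfies
`μ_p(ℒ) = 0`. -/
theorem lp_norm_nonincreasing_and_mu_zero {N n : ℕ} (hN : 0 < N) (hn : 0 < n)
    (L : Matrix (Fin N) (Fin N) ℝ) (hsym : L.IsSymm)
    (hL1 : L.mulVec (fun _ => 1) = 0)
    (hoff : ∀ i j, i ≠ j → L i j ≤ 0)
    (d : Fin n → ℝ) (hd : ∀ i, 0 < d i)
    (p : ENNReal) (hp : 1 ≤ p)
    (u : ℝ → (Fin N × Fin n → ℝ))
    (hu : ∀ t, HasDerivAt u ((-(L ⊗ₖ Matrix.diagonal d)).mulVec (u t)) t) :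
    (∀ s t : ℝ, 0 ≤ s → s ≤ t → lpVecNorm p (u t) ≤ lpVecNorm p (u s)) ∧
    Tendsto (fun h : ℝ =>
        (lpOpNorm p ((1 : Matrix (Fin N × Fin n) (Fin N × Fin n) ℝ)
          + h • (-(L ⊗ₖ Matrix.diagonal d))) - 1) / h)
      (nhdsWithin 0 (Set.Ioi 0)) (nhds 0) := by
  have : Nonempty (Fin N × Fin n) := ⟨(⟨0, hN⟩, ⟨0, hn⟩)⟩
  have hgen :=
    isDoublyStochasticGenerator_neg_kronecker_diagonal hsym hL1 hoff fun i => (hd i).le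
  refine ⟨fun s t _ hst => ?_, ?_⟩
  · rw [eq_exp_smul_mulVec_of_hasDerivAt hu s t]
    exact lpVecNorm_mulVec_le (hgen.smul (sub_nonneg.2 hst)).exp_mem_doublyStochastic hp _
  · refine tendsto_const_nhds.congr' ?_
    filter_upwards [hgen.eventually_one_add_smul_mem_doublyStochastic] with h hh
    rw [lpOpNorm_eq_one hh hp, sub_self, zero_div]
end

section
/- Let X be a finite-dimensional real normed space, G : X → X a globally Lipschitz map, and u, v : [0,∞) → X two solutions of u̇ = G(u). Then for all t ≥ 0, ‖u(t) − v(t)‖ ≤ e^{M⁺[G]·t} ‖u(0) − v(0)‖, where M⁺[G] = sup_{x≠y} (x−y, G(x)−G(y))_+ / ‖x−y‖² is the strong least upper bound logarithmic Lipschitz constant (assumed finite). -/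
open Filter

/-- Right semi inner product: `(x,y)₊ = ‖x‖ · lim_{h→0⁺} (‖x+hy‖-‖x‖)/h`. -/
noncomputable def sipPlus {X : Type*} [NormedAddCommGroup X] [NormedSpace ℝ X] (x y : X) : ℝ :=
  ‖x‖ * limUnder (nhdsWithin 0 (Set.Ioi 0)) (fun h : ℝ => (‖x + h • y‖ - ‖x‖) / h)

/-- The set of values whose supremum is the strong lub logarithmic Lipschitz constant
`M⁺[G] = sup_{x ≠ y} (x-y, G(x)-G(y))₊ / ‖x-y‖²`. -/
def MplusSet {X : Type*} [NormedAddCommGroup X] [NormedSpace ℝ X] (G : X → X) : Set ℝ :=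
  {c | ∃ x y : X, x ≠ y ∧ c = sipPlus (x - y) (G x - G y) / ‖x - y‖ ^ 2}

/-! The slopes `(‖x + h y‖ - ‖x‖) / h` are monotone in `h > 0` by convexity of the norm, so the
right semi-inner product exists as a limit and `(x, y)₊ = ‖x‖ · D⁺`, where `D⁺` is the right
derivative of `h ↦ ‖x + h y‖` at `0`. For `w = u - v` this `D⁺` is the right derivative of
`‖w‖`, and the definition of `M⁺[G]` gives `D⁺‖w‖ ≤ M⁺[G] ‖w‖` (trivially where `w = 0`).
Grönwall's inequality for right derivatives then yields the bound. -/

open Set Topology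

section NormSlope

variable {X : Type*} [NormedAddCommGroup X] [NormedSpace ℝ X]

noncomputable def normSlope (x y : X) (h : ℝ) : ℝ :=
  (‖x + h • y‖ - ‖x‖) / h

-- The slopes decrease as `h ↓ 0` by convexity of the norm, so this infimum is their limit.
noncomputable def normRightDeriv (x y : X) : ℝ :=
  sInf (normSlope x y '' Ioi 0)

theorem convexOn_norm_add_smul_s19 (x y : X) : ConvexOn ℝ univ fun h : ℝ => ‖x + h • y‖ := by
  have hline : (fun h : ℝ => ‖x + h • y‖) = norm ∘ AffineMap.lineMap x (x + y) := by
    funext h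
    simp [AffineMap.lineMap_apply, add_comm]
  rw [hline]
  exact (convexOn_norm convex_univ).comp_affineMap _

theorem monotoneOn_normSlope (x y : X) : MonotoneOn (normSlope x y) (Ioi 0) := by
  intro a ha b hb hab
  simpa [normSlope] using (convexOn_norm_add_smul_s19 x y).secant_mono (a := 0)
    (mem_univ _) (mem_univ _) (mem_univ _) (ne_of_gt ha) (ne_of_gt hb) hab

theorem neg_norm_le_normSlope (x y : X) {h : ℝ} (hh : 0 < h) : -‖y‖ ≤ normSlope x y h := by
  have hx := norm_sub_norm_le x (x + h • y)
  rw [sub_add_cancel_left, norm_neg, norm_smul, Real.norm_of_nonneg hh.le] at hx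
  rw [normSlope, le_div_iff₀ hh]
  linarith

theorem tendsto_normSlope (x y : X) :
    Tendsto (normSlope x y) (𝓝[>] 0) (𝓝 (normRightDeriv x y)) :=
  (monotoneOn_normSlope x y).tendsto_nhdsGT
    ⟨-‖y‖, by rintro _ ⟨h, hh, rfl⟩; exact neg_norm_le_normSlope x y hh⟩

theorem sipPlus_eq_norm_mul_normRightDeriv (x y : X) :
    sipPlus x y = ‖x‖ * normRightDeriv x y :=
  congrArg (‖x‖ * ·) (tendsto_normSlope x y).limUnder_eq

theorem normRightDeriv_zero_left (y : X) : normRightDeriv 0 y = ‖y‖ := by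
  have hconst : EqOn (normSlope 0 y) (fun _ => ‖y‖) (Ioi 0) := by
    intro h hh
    simp [normSlope, norm_smul, abs_of_pos (mem_Ioi.1 hh), (mem_Ioi.1 hh).ne']
  rw [normRightDeriv, hconst.image_eq, nonempty_Ioi.image_const, csInf_singleton]

theorem HasDerivAt.tendsto_slope_norm_nhdsGT {w : ℝ → X} {w' : X} {s : ℝ}
    (hw : HasDerivAt w w' s) :
    Tendsto (fun z => (z - s)⁻¹ * (‖w z‖ - ‖w s‖)) (𝓝[>] s)
      (𝓝 (normRightDeriv (w s) w')) := by
  have hshift : Tendsto (fun z => z - s) (𝓝[>] s) (𝓝[>] 0) := by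
    refine tendsto_nhdsWithin_iff.2
      ⟨?_, eventually_nhdsWithin_of_forall fun _ hz => sub_pos.2 (mem_Ioi.1 hz)⟩
    simpa using ((continuous_sub_right s).tendsto s).mono_left nhdsWithin_le_nhds
  have herror : (fun z => ‖w z‖ - ‖w s + (z - s) • w'‖) =o[𝓝 s] fun z => z - s := by
    refine (Asymptotics.IsBigO.of_bound 1 (Eventually.of_forall fun z => ?_)).trans_isLittleO
      hw.isLittleO
    rw [one_mul, Real.norm_eq_abs, sub_sub]
    exact abs_norm_sub_norm_le _ _
  have hsum := (herror.tendsto_div_nhds_zero.mono_left nhdsWithin_le_nhds).add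
    ((tendsto_normSlope (w s) w').comp hshift)
  rw [zero_add] at hsum
  refine hsum.congr fun z => ?_
  simp only [Function.comp_apply, normSlope]
  ring

theorem normRightDeriv_sub_le_sSup_mul {G : X → X} (hbdd : BddAbove (MplusSet G)) (x y : X) :
    normRightDeriv (x - y) (G x - G y) ≤ sSup (MplusSet G) * ‖x - y‖ := by
  rcases eq_or_ne x y with rfl | hxy
  · simp [normRightDeriv_zero_left]
  have hpos : 0 < ‖x - y‖ := norm_pos_iff.2 (sub_ne_zero.2 hxy)
  have hle := le_csSup hbdd ⟨x, y, hxy, rfl⟩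
  rw [sipPlus_eq_norm_mul_normRightDeriv, div_le_iff₀ (by positivity), sq, ← mul_assoc,
    mul_comm _ ‖x - y‖] at hle
  exact le_of_mul_le_mul_left hle hpos

-- `‖w‖` need not be differentiable, but `normRightDeriv (w s) (w' s)` is its right derivative.
theorem norm_le_exp_mul_of_normRightDeriv_le {w w' : ℝ → X} {M t : ℝ}
    (hw : ∀ s, HasDerivAt w (w' s) s)
    (hbound : ∀ s, normRightDeriv (w s) (w' s) ≤ M * ‖w s‖) (ht : 0 ≤ t) :
    ‖w t‖ ≤ Real.exp (M * t) * ‖w 0‖ := by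
  have hcont : ContinuousOn (fun s => ‖w s‖) (Icc 0 t) :=
    (continuous_iff_continuousAt.2 fun s => (hw s).continuousAt).norm.continuousOn
  have hslope : ∀ s ∈ Ico 0 t, ∀ r, normRightDeriv (w s) (w' s) < r →
      ∃ᶠ z in 𝓝[>] s, (z - s)⁻¹ * (‖w z‖ - ‖w s‖) < r := fun s _ r hr =>
    ((hw s).tendsto_slope_norm_nhdsGT.eventually_lt_const hr).frequently
  have := le_gronwallBound_of_liminf_deriv_right_le hcont hslope le_rfl
    (fun s _ => (hbound s).trans_eq (add_zero _).symm) t ⟨ht, le_rfl⟩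
  rwa [sub_zero, gronwallBound_ε0, mul_comm] at this

end NormSlope

theorem contraction_estimate_general {X : Type*} [NormedAddCommGroup X] [NormedSpace ℝ X]
    (G : X → X)
    (hbdd : BddAbove (MplusSet G))
    (u v : ℝ → X)
    (hu : ∀ t, HasDerivAt u (G (u t)) t)
    (hv : ∀ t, HasDerivAt v (G (v t)) t)
    (t : ℝ) (ht : 0 ≤ t) :
    ‖u t - v t‖ ≤ Real.exp (sSup (MplusSet G) * t) * ‖u 0 - v 0‖ :=
  norm_le_exp_mul_of_normRightDeriv_le (w := u - v) (fun s => (hu s).sub (hv s))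
    (fun s => normRightDeriv_sub_le_sSup_mul hbdd (u s) (v s)) ht

/-- For a globally Lipschitz vector field `G` on a finite-dimensional real normed space with
finite strong lub logarithmic Lipschitz constant `M⁺[G]`, any two solutions of `u̇ = G(u)`
satisfy `‖u(t) - v(t)‖ ≤ e^{M⁺[G]·t} ‖u(0) - v(0)‖` for `t ≥ 0`. -/
theorem contraction_estimate {X : Type*} [NormedAddCommGroup X] [NormedSpace ℝ X]
    [FiniteDimensional ℝ X] [Nontrivial X]
    (G : X → X) (K : NNReal) (hG : LipschitzWith K G)
    (hbdd : BddAbove (MplusSet G))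
    (u v : ℝ → X)
    (hu : ∀ t, HasDerivAt u (G (u t)) t)
    (hv : ∀ t, HasDerivAt v (G (v t)) t)
    (t : ℝ) (ht : 0 ≤ t) :
    ‖u t - v t‖ ≤ Real.exp (sSup (MplusSet G) * t) * ‖u 0 - v 0‖ :=
  contraction_estimate_general G hbdd u v hu hv t ht
end
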